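/- arXiv:2012.15111 — 5 statements merged into one kernel-verified Lean document; each statement's English description precedes it below -/
import Mathlib

section
/- Let V be a finite-dimensional real vector space with a nondegenerate symmetric bilinear form g of Lorentz signature (1,n), n ≥ 1. If A and B are symmetric real-valued multilinear maps of rank r on V and A(u,...,u) = B(u,...,u) for every timelike unit vector u (i.e. g(u,u) = −1), then A = B. -/
/-!
Put `f = A - B`. By homogeneity, `f (u, …, u) = 0` for every `u` with `g u u < 0`. Fix such a `w`
(e.g. `e 0`) and any `v`; `t ↦ f (w + t v, …, w + t v)` is a polynomial in `t` vanishing on the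
neighbourhood of `0` where `w + t v` stays timelike, so it is zero, and its leading coefficient
`f (v, …, v)` vanishes. A symmetric multilinear form with vanishing diagonal is zero in
characteristic `0`: the coefficient of `t` in `f (v + t u, …, v + t u)` is `r f (u, v, …, v)`, so
every `f (u, ·)` again has vanishing diagonal, and one inducts on `r`.
-/

open Polynomial Finset Filter Topology

namespace MultilinearMap

variable {K V : Type*} [Field K] [AddCommGroup V] [Module K V] {r : ℕ}

def IsSymmetric (f : MultilinearMap K (fun _ : Fin r => V) K) : Prop :=
  ∀ (v : Fin r → V) (σ : Equiv.Perm (Fin r)), f (v ∘ σ) = f v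

lemma IsSymmetric.sub {f f' : MultilinearMap K (fun _ : Fin r => V) K}
    (hf : f.IsSymmetric) (hf' : f'.IsSymmetric) : (f - f').IsSymmetric := fun v σ => by
  simp only [sub_apply, hf v σ, hf' v σ]

lemma IsSymmetric.curryLeft {f : MultilinearMap K (fun _ : Fin (r + 1) => V) K}
    (hf : f.IsSymmetric) (u : V) : (f.curryLeft u).IsSymmetric := fun w σ => by
  have hperm : (Fin.cons u w : Fin (r + 1) → V) ∘ Equiv.Perm.decomposeFin.symm (0, σ)
      = Fin.cons u (w ∘ σ) := by
    funext i
    refine Fin.cases ?_ (fun j => ?_) i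
    · simp
    · simp [Equiv.Perm.decomposeFin_symm_apply_succ]
  simp only [curryLeft_apply]
  rw [← hperm, hf]

lemma apply_diag_smul (f : MultilinearMap K (fun _ : Fin r => V) K) (c : K) (x : V) :
    f (fun _ => c • x) = c ^ r * f (fun _ => x) := by
  simpa using f.map_smul_univ (fun _ => c) (fun _ => x)

noncomputable def diagLinePoly (f : MultilinearMap K (fun _ : Fin r => V) K) (u v : V) : K[X] :=
  ∑ S : Finset (Fin r), C (f (S.piecewise (fun _ => v) (fun _ => u))) * X ^ S.card

variable (f : MultilinearMap K (fun _ : Fin r => V) K) (u v : V)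

lemma eval_diagLinePoly (t : K) : (f.diagLinePoly u v).eval t = f (fun _ => u + t • v) := by
  have hsplit : (fun _ : Fin r => u + t • v) = (fun _ => t • v) + (fun _ => u) := by
    funext; simp [add_comm]
  rw [hsplit, f.map_add_univ, diagLinePoly, eval_finsetSum]
  refine sum_congr rfl fun S _ => ?_
  have hpw : S.piecewise (fun _ => t • v) (fun _ => u)
      = S.piecewise (fun i => t • S.piecewise (fun _ => v) (fun _ => u) i)
          (S.piecewise (fun _ => v) (fun _ => u)) := by
    funext i
    by_cases hi : i ∈ S <;> simp [hi]
  rw [hpw, f.map_piecewise_smul]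
  simp only [eval_mul, eval_C, eval_pow, eval_X, prod_const, smul_eq_mul]
  ring

lemma coeff_diagLinePoly (k : ℕ) : (f.diagLinePoly u v).coeff k
    = ∑ S ∈ powersetCard k univ, f (S.piecewise (fun _ => v) (fun _ => u)) := by
  simp only [diagLinePoly, finsetSum_coeff, coeff_C_mul_X_pow, powersetCard_eq_filter,
    powerset_univ, sum_filter, eq_comm]

lemma coeff_diagLinePoly_self : (f.diagLinePoly u v).coeff r = f (fun _ => v) := by
  have huniv : powersetCard r (univ : Finset (Fin r)) = {univ} := by
    simpa using powersetCard_self (univ : Finset (Fin r))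
  simp [coeff_diagLinePoly, huniv]

lemma coeff_diagLinePoly_one :
    (f.diagLinePoly u v).coeff 1 = ∑ j, f (Function.update (fun _ => u) j v) := by
  simp [coeff_diagLinePoly, powersetCard_one, piecewise_singleton]

lemma diagLinePoly_eq_zero {T : Set K} (hT : T.Infinite)
    (hzero : ∀ t ∈ T, f (fun _ => u + t • v) = 0) : f.diagLinePoly u v = 0 :=
  eq_zero_of_infinite_isRoot _ <| hT.mono fun t ht => by simp [eval_diagLinePoly, hzero t ht]

variable [CharZero K] {f}

lemma IsSymmetric.apply_cons_eq_zero {f : MultilinearMap K (fun _ : Fin (r + 1) => V) K}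
    (hf : f.IsSymmetric) (hdiag : ∀ x, f (fun _ => x) = 0) :
    f (Fin.cons u fun _ => v) = 0 := by
  have hpoly : f.diagLinePoly v u = 0 :=
    f.diagLinePoly_eq_zero v u (T := Set.univ) Set.infinite_univ fun t _ => hdiag _
  have hsum := congrArg (coeff · 1) hpoly
  simp only [coeff_diagLinePoly_one, coeff_zero] at hsum
  have hswap : ∀ j, f (Function.update (fun _ => v) j u) = f (Function.update (fun _ => v) 0 u) :=
    fun j => by
      rw [← hf _ (Equiv.swap 0 j), Function.update_comp_equiv, Equiv.symm_swap,
        Equiv.swap_apply_right]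
      rfl
  simp only [hswap, sum_const, card_univ, Fintype.card_fin, nsmul_eq_mul] at hsum
  have hcons : (Fin.cons u fun _ => v : Fin (r + 1) → V) = Function.update (fun _ => v) 0 u := by
    funext i
    cases i using Fin.cases <;> simp
  rw [hcons]
  exact (mul_eq_zero.mp hsum).resolve_left (Nat.cast_ne_zero.mpr r.succ_ne_zero)

theorem IsSymmetric.eq_zero_of_apply_diag_eq_zero (hf : f.IsSymmetric)
    (hdiag : ∀ x, f (fun _ => x) = 0) : f = 0 := by
  induction r with
  | zero =>
    ext w
    simpa [Subsingleton.elim w (fun _ => 0)] using hdiag 0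
  | succ m ih =>
    have hcurry : ∀ u, f.curryLeft u = 0 := fun u =>
      ih (IsSymmetric.curryLeft hf u) (IsSymmetric.apply_cons_eq_zero u · hf hdiag)
    ext w
    simpa [Fin.cons_self_tail] using congrArg (· (Fin.tail w)) (hcurry (w 0))

end MultilinearMap

section Lorentz

variable {V : Type*} [AddCommGroup V] [Module ℝ V] {r : ℕ}

lemma LinearMap.eventually_apply_add_smul_neg (g : V →ₗ[ℝ] V →ₗ[ℝ] ℝ) {w : V} (hw : g w w < 0)
    (v : V) : ∀ᶠ t in 𝓝 (0 : ℝ), g (w + t • v) (w + t • v) < 0 := by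
  have hexpand : ∀ t : ℝ,
      g (w + t • v) (w + t • v) = g w w + t * (g w v + g v w) + t ^ 2 * g v v := fun t => by
    simp only [map_add, map_smul, LinearMap.add_apply, LinearMap.smul_apply, smul_eq_mul]
    ring
  simp only [hexpand]
  have hcont : Continuous fun t : ℝ => g w w + t * (g w v + g v w) + t ^ 2 * g v v := by
    fun_prop
  exact hcont.continuousAt.eventually_lt continuousAt_const (by simpa using hw)

variable (g : V →ₗ[ℝ] V →ₗ[ℝ] ℝ) (f : MultilinearMap ℝ (fun _ : Fin r => V) ℝ)

lemma MultilinearMap.apply_diag_eq_zero_of_neg_self (hf : ∀ u, g u u = -1 → f (fun _ => u) = 0)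
    {u : V} (hu : g u u < 0) : f (fun _ => u) = 0 := by
  set s := √(-g u u)
  have hs : 0 < s := Real.sqrt_pos.mpr (neg_pos.mpr hu)
  have hunit : g (s⁻¹ • u) (s⁻¹ • u) = -1 := by
    have hsq : s ^ 2 = -g u u := Real.sq_sqrt (neg_nonneg.mpr hu.le)
    simp only [map_smul, LinearMap.smul_apply, smul_eq_mul]
    field_simp
    linarith
  rw [← smul_inv_smul₀ hs.ne' u, f.apply_diag_smul, hf _ hunit, mul_zero]

lemma MultilinearMap.apply_diag_eq_zero_of_forall_eq_neg_one {w : V} (hw : g w w < 0)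
    (hf : ∀ u, g u u = -1 → f (fun _ => u) = 0) (v : V) : f (fun _ => v) = 0 := by
  have hline := g.eventually_apply_add_smul_neg hw v
  rw [← f.coeff_diagLinePoly_self w v,
    f.diagLinePoly_eq_zero w v (infinite_of_mem_nhds 0 hline)
      fun t ht => f.apply_diag_eq_zero_of_neg_self g hf ht,
    coeff_zero]

end Lorentz

theorem observer_principle_lorentz_general
    {V : Type*} [AddCommGroup V] [Module ℝ V]
    {n : ℕ}
    (g : V →ₗ[ℝ] V →ₗ[ℝ] ℝ)
    (e : Module.Basis (Fin (n + 1)) ℝ V)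
    (hbasis : ∀ i j : Fin (n + 1),
      g (e i) (e j) = if i = j then (if i = 0 then (-1 : ℝ) else 1) else 0)
    {r : ℕ}
    (A B : MultilinearMap ℝ (fun _ : Fin r => V) ℝ)
    (hAsym : ∀ (v : Fin r → V) (σ : Equiv.Perm (Fin r)), A (v ∘ σ) = A v)
    (hBsym : ∀ (v : Fin r → V) (σ : Equiv.Perm (Fin r)), B (v ∘ σ) = B v)
    (h : ∀ u : V, g u u = -1 → A (fun _ => u) = B (fun _ => u)) :
    A = B := by
  have htimelike : g (e 0) (e 0) < 0 := by simp [hbasis]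
  rw [← sub_eq_zero]
  refine (MultilinearMap.IsSymmetric.sub hAsym hBsym).eq_zero_of_apply_diag_eq_zero fun v => ?_
  exact (A - B).apply_diag_eq_zero_of_forall_eq_neg_one g htimelike
    (fun u hu => by simp [h u hu]) v

/-- **Observer Principle for Lorentz vector spaces.**  Let `V` be a finite-dimensional real
vector space with a nondegenerate symmetric bilinear form `g` of Lorentz signature
`(1,n)` (`n ≥ 1`), expressed via an orthonormal-type basis `e` with
`g(e 0, e 0) = -1` and `g(e i, e i) = 1` for `i ≠ 0`.  If `A` and `B` are symmetric
real-valued multilinear maps of rank `r` on `V` and `A(u,…,u) = B(u,…,u)` for every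
timelike unit vector `u` (i.e. `g u u = -1`), then `A = B`. -/
theorem observer_principle_lorentz
    {V : Type*} [AddCommGroup V] [Module ℝ V]
    {n : ℕ} (hn : 1 ≤ n)
    (g : V →ₗ[ℝ] V →ₗ[ℝ] ℝ)
    (hgsym : ∀ u v, g u v = g v u)
    (e : Module.Basis (Fin (n + 1)) ℝ V)
    (hbasis : ∀ i j : Fin (n + 1),
      g (e i) (e j) = if i = j then (if i = 0 then (-1 : ℝ) else 1) else 0)
    {r : ℕ}
    (A B : MultilinearMap ℝ (fun _ : Fin r => V) ℝ)
    (hAsym : ∀ (v : Fin r → V) (σ : Equiv.Perm (Fin r)), A (v ∘ σ) = A v)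
    (hBsym : ∀ (v : Fin r → V) (σ : Equiv.Perm (Fin r)), B (v ∘ σ) = B v)
    (h : ∀ u : V, g u u = -1 → A (fun _ => u) = B (fun _ => u)) :
    A = B :=
  observer_principle_lorentz_general g e hbasis A B hAsym hBsym h
end

section
/- In ℝ[S_3], setting R = (4/3)·R₁ = (4/3)Q⁻_τ ν Q⁺_τ and J = Q⁺_τ ν Q⁻_τ, the elements Q_J = J·R and Q_R = R·J are self-adjoint idempotents with Q_J·Q_R = 0 = Q_R·Q_J, Q_J·J = J = J·Q_R, Q_R·R = R = R·Q_J, Q_J·C = 0 = C·Q_R, Q⁺_τ·Q_J = Q_J = Q_J·Q⁺_τ, and Q⁻_τ·Q_R = Q_R = Q_R·Q⁻_τ. -/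
noncomputable section

/-- `τ = (1 2)` in `S₃` (on `Fin 3`: swaps `0` and `1`). -/
def tau3 : Equiv.Perm (Fin 3) := Equiv.swap 0 1

/-- `ν = (1 3)` in `S₃` (on `Fin 3`: swaps `0` and `2`). -/
def nu3 : Equiv.Perm (Fin 3) := Equiv.swap 0 2

/-- `c = (1 2 3)` the 3-cycle in `S₃`. -/
def cyc3 : Equiv.Perm (Fin 3) := finRotate 3

/-- The canonical image of a permutation in the real group algebra `ℝ[S₃]`. -/
def oA (σ : Equiv.Perm (Fin 3)) : MonoidAlgebra ℝ (Equiv.Perm (Fin 3)) :=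
  MonoidAlgebra.of ℝ (Equiv.Perm (Fin 3)) σ

/-- `Q⁺_τ = (1 + τ)/2` in `ℝ[S₃]`. -/
def Qp : MonoidAlgebra ℝ (Equiv.Perm (Fin 3)) := ((1 : ℝ) / 2) • (1 + oA tau3)

/-- `Q⁻_τ = (1 − τ)/2` in `ℝ[S₃]`. -/
def Qm : MonoidAlgebra ℝ (Equiv.Perm (Fin 3)) := ((1 : ℝ) / 2) • (1 - oA tau3)

/-- `C = 1 + c + c²` in `ℝ[S₃]`. -/
def Cel : MonoidAlgebra ℝ (Equiv.Perm (Fin 3)) := 1 + oA cyc3 + oA cyc3 * oA cyc3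

/-- `J = Q⁺_τ · ν · Q⁻_τ` in `ℝ[S₃]`. -/
def Jel : MonoidAlgebra ℝ (Equiv.Perm (Fin 3)) := Qp * oA nu3 * Qm

/-- `R₁ = Q⁻_τ · ν · Q⁺_τ` in `ℝ[S₃]`. -/
def R1el : MonoidAlgebra ℝ (Equiv.Perm (Fin 3)) := Qm * oA nu3 * Qp
/-- `R = (4/3)·R₁` in `ℝ[S₃]`. -/
def RRel : MonoidAlgebra ℝ (Equiv.Perm (Fin 3)) := ((4 : ℝ) / 3) • R1el

/-- `Q_J = J·R` in `ℝ[S₃]`. -/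
def QJ : MonoidAlgebra ℝ (Equiv.Perm (Fin 3)) := Jel * RRel

/-- `Q_R = R·J` in `ℝ[S₃]`. -/
def QR : MonoidAlgebra ℝ (Equiv.Perm (Fin 3)) := RRel * Jel

/-- The star (adjoint) operation on `ℝ[S₃]` induced by inversion in the group. -/
def starA (x : MonoidAlgebra ℝ (Equiv.Perm (Fin 3))) :
    MonoidAlgebra ℝ (Equiv.Perm (Fin 3)) :=
  MonoidAlgebra.ofCoeff (Finsupp.mapDomain (fun σ : Equiv.Perm (Fin 3) => σ⁻¹) x.coeff)

/-! `τ` and `ν` satisfy the Coxeter relations `τ² = ν² = 1`, `ντν = τντ` of `S₃`, and every identity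
needed holds for any two such elements `s, n` of a real algebra. The central one is
`J R₁ J = (3/4) J`, with its mirror `R₁ J R₁ = (3/4) R₁`: thus `R = (4/3) R₁` is a generalized inverse
of `J`, which makes `Q_J = J R` and `Q_R = R J` idempotent with `Q_J J = J = J Q_R` and
`Q_R R = R = R Q_J`. Orthogonality comes from `J² = 0 = R²`, a consequence of `Q⁻_τ Q⁺_τ = 0`, and
`R` annihilates `C` on both sides. The star reverses products and fixes `τ` and `ν`, so it exchanges
`J` and `R₁` and fixes `Q_J` and `Q_R`. -/

structure CoxeterS3 {M : Type*} [Monoid M] (s n : M) : Prop where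
  mul_self_fst : s * s = 1
  mul_self_snd : n * n = 1
  braid : n * s * n = s * n * s

namespace CoxeterS3

section Monoid

variable {M N : Type*} [Monoid M] [Monoid N] {s n : M}

theorem map (h : CoxeterS3 s n) (f : M →* N) : CoxeterS3 (f s) (f n) where
  mul_self_fst := by rw [← map_mul, h.mul_self_fst, map_one]
  mul_self_snd := by rw [← map_mul, h.mul_self_snd, map_one]
  braid := by simp only [← map_mul, h.braid]

-- Right-associated, `ss ↦ 1`, `nn ↦ 1`, `nsn ↦ sns` is a complete rewriting system for `S₃`:
-- `simp` with these lemmas reduces every word in `s, n` to one of `1, s, n, sn, ns, sns`.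
theorem mul_self_fst_mul (h : CoxeterS3 s n) (x : M) : s * (s * x) = x := by
  rw [← mul_assoc, h.mul_self_fst, one_mul]

theorem mul_self_snd_mul (h : CoxeterS3 s n) (x : M) : n * (n * x) = x := by
  rw [← mul_assoc, h.mul_self_snd, one_mul]

theorem braid_assoc (h : CoxeterS3 s n) : n * (s * n) = s * (n * s) := by
  simp only [← mul_assoc, h.braid]

theorem braid_mul (h : CoxeterS3 s n) (x : M) : n * (s * (n * x)) = s * (n * (s * x)) := by
  simp only [← mul_assoc, h.braid]

end Monoid

end CoxeterS3

section Projections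

variable {A : Type*} [Ring A] [Algebra ℝ A] {s n : A}

def plusProj (s : A) : A := (1 / 2 : ℝ) • (1 + s)

def minusProj (s : A) : A := (1 / 2 : ℝ) • (1 - s)

theorem isIdempotentElem_plusProj (hs : s * s = 1) : IsIdempotentElem (plusProj s) := by
  simp only [IsIdempotentElem, plusProj, smul_mul_smul_comm, mul_add, add_mul, one_mul, mul_one, hs]
  module

theorem isIdempotentElem_minusProj (hs : s * s = 1) : IsIdempotentElem (minusProj s) := by
  simp only [IsIdempotentElem, minusProj, smul_mul_smul_comm, mul_sub, sub_mul, one_mul,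
    mul_one, hs]
  module

theorem plusProj_mul_minusProj (hs : s * s = 1) : plusProj s * minusProj s = 0 := by
  simp only [plusProj, minusProj, smul_mul_smul_comm, mul_sub, add_mul, one_mul, mul_one, hs]
  module

theorem minusProj_mul_plusProj (hs : s * s = 1) : minusProj s * plusProj s = 0 := by
  simp only [plusProj, minusProj, smul_mul_smul_comm, mul_add, sub_mul, one_mul, mul_one, hs]
  module

theorem CoxeterS3.plusProj_sandwich_cube (h : CoxeterS3 s n) :
    plusProj s * n * minusProj s * (minusProj s * n * plusProj s) * (plusProj s * n * minusProj s) =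
      (3 / 4 : ℝ) • (plusProj s * n * minusProj s) := by
  simp only [plusProj, minusProj, smul_mul_assoc, mul_smul_comm, smul_smul, mul_add, add_mul,
    mul_sub, sub_mul, smul_add, smul_sub, one_mul, mul_one, mul_assoc, h.mul_self_fst,
    h.mul_self_snd, h.mul_self_fst_mul, h.mul_self_snd_mul, h.braid_assoc, h.braid_mul]
  module

theorem CoxeterS3.minusProj_sandwich_cube (h : CoxeterS3 s n) :
    minusProj s * n * plusProj s * (plusProj s * n * minusProj s) * (minusProj s * n * plusProj s) =
      (3 / 4 : ℝ) • (minusProj s * n * plusProj s) := by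
  simp only [plusProj, minusProj, smul_mul_assoc, mul_smul_comm, smul_smul, mul_add, add_mul,
    mul_sub, sub_mul, smul_add, smul_sub, one_mul, mul_one, mul_assoc, h.mul_self_fst,
    h.mul_self_snd, h.mul_self_fst_mul, h.mul_self_snd_mul, h.braid_assoc, h.braid_mul]
  module

theorem CoxeterS3.minusProj_sandwich_mul_cycleSum (h : CoxeterS3 s n) :
    minusProj s * n * plusProj s * (1 + n * s + n * s * (n * s)) = 0 := by
  simp only [plusProj, minusProj, smul_mul_assoc, mul_smul_comm, smul_smul, mul_add, add_mul,
    sub_mul, smul_add, smul_sub, one_mul, mul_one, mul_assoc, h.mul_self_fst,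
    h.mul_self_snd, h.mul_self_fst_mul, h.mul_self_snd_mul, h.braid_assoc, h.braid_mul]
  module

theorem CoxeterS3.cycleSum_mul_minusProj_sandwich (h : CoxeterS3 s n) :
    (1 + n * s + n * s * (n * s)) * (minusProj s * n * plusProj s) = 0 := by
  simp only [plusProj, minusProj, smul_mul_assoc, mul_smul_comm, smul_smul, mul_add, add_mul,
    mul_sub, sub_mul, smul_add, smul_sub, one_mul, mul_one, mul_assoc, h.mul_self_fst,
    h.mul_self_snd, h.mul_self_fst_mul, h.mul_self_snd_mul, h.braid_assoc, h.braid_mul]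
  module

end Projections

theorem coxeterS3_tau3_nu3 : CoxeterS3 tau3 nu3 := ⟨by decide, by decide, by decide⟩

theorem coxeterS3_oA : CoxeterS3 (oA tau3) (oA nu3) :=
  coxeterS3_tau3_nu3.map (MonoidAlgebra.of ℝ _)

theorem Cel_eq : Cel = 1 + oA nu3 * oA tau3 + oA nu3 * oA tau3 * (oA nu3 * oA tau3) := by
  simp only [Cel, oA, show cyc3 = nu3 * tau3 by decide, map_mul]

theorem isIdempotentElem_Qp : IsIdempotentElem Qp :=
  isIdempotentElem_plusProj coxeterS3_oA.mul_self_fst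

theorem isIdempotentElem_Qm : IsIdempotentElem Qm :=
  isIdempotentElem_minusProj coxeterS3_oA.mul_self_fst

theorem Jel_mul_RRel_mul_Jel : Jel * RRel * Jel = Jel := by
  have h : Jel * R1el * Jel = (3 / 4 : ℝ) • Jel := coxeterS3_oA.plusProj_sandwich_cube
  rw [RRel, mul_smul_comm, smul_mul_assoc, h, smul_smul]
  norm_num

theorem RRel_mul_Jel_mul_RRel : RRel * Jel * RRel = RRel := by
  have h : R1el * Jel * R1el = (3 / 4 : ℝ) • R1el := coxeterS3_oA.minusProj_sandwich_cube
  rw [RRel, smul_mul_assoc, smul_mul_assoc, mul_smul_comm, h, smul_smul, smul_smul]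
  norm_num

theorem Qp_mul_Qm : Qp * Qm = 0 := plusProj_mul_minusProj coxeterS3_oA.mul_self_fst

theorem Qm_mul_Qp : Qm * Qp = 0 := minusProj_mul_plusProj coxeterS3_oA.mul_self_fst

theorem Jel_mul_Jel : Jel * Jel = 0 := by
  rw [Jel, ← mul_assoc, ← mul_assoc, mul_assoc (Qp * oA nu3) Qm Qp, Qm_mul_Qp]
  simp only [mul_zero, zero_mul]

theorem RRel_mul_RRel : RRel * RRel = 0 := by
  rw [RRel, smul_mul_smul_comm, R1el, ← mul_assoc, ← mul_assoc, mul_assoc (Qm * oA nu3) Qp Qm,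
    Qp_mul_Qm]
  simp only [mul_zero, zero_mul, smul_zero]

theorem RRel_mul_Cel : RRel * Cel = 0 := by
  have h : R1el * Cel = 0 := by rw [Cel_eq]; exact coxeterS3_oA.minusProj_sandwich_mul_cycleSum
  rw [RRel, smul_mul_assoc, h, smul_zero]

theorem Cel_mul_RRel : Cel * RRel = 0 := by
  have h : Cel * R1el = 0 := by rw [Cel_eq]; exact coxeterS3_oA.cycleSum_mul_minusProj_sandwich
  rw [RRel, mul_smul_comm, h, smul_zero]

theorem Qp_mul_Jel : Qp * Jel = Jel := by
  rw [Jel, ← mul_assoc, ← mul_assoc, isIdempotentElem_Qp.eq]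

theorem Jel_mul_Qm : Jel * Qm = Jel := by
  rw [Jel, mul_assoc, isIdempotentElem_Qm.eq]

theorem Qm_mul_RRel : Qm * RRel = RRel := by
  rw [RRel, mul_smul_comm, R1el, ← mul_assoc, ← mul_assoc, isIdempotentElem_Qm.eq]

theorem RRel_mul_Qp : RRel * Qp = RRel := by
  rw [RRel, smul_mul_assoc, R1el, mul_assoc, isIdempotentElem_Qp.eq]

theorem oA_mul (σ ρ : Equiv.Perm (Fin 3)) : oA (σ * ρ) = oA σ * oA ρ := map_mul _ σ ρ

theorem starA_add (x y : MonoidAlgebra ℝ (Equiv.Perm (Fin 3))) :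
    starA (x + y) = starA x + starA y :=
  map_add (MonoidAlgebra.mapDomainLinearMap ℝ ℝ (·⁻¹)) x y

theorem starA_sub (x y : MonoidAlgebra ℝ (Equiv.Perm (Fin 3))) :
    starA (x - y) = starA x - starA y :=
  map_sub (MonoidAlgebra.mapDomainLinearMap ℝ ℝ (·⁻¹)) x y

theorem starA_smul (r : ℝ) (x : MonoidAlgebra ℝ (Equiv.Perm (Fin 3))) :
    starA (r • x) = r • starA x :=
  map_smul (MonoidAlgebra.mapDomainLinearMap ℝ ℝ (·⁻¹)) r x

theorem starA_oA (σ : Equiv.Perm (Fin 3)) : starA (oA σ) = oA σ⁻¹ :=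
  MonoidAlgebra.mapDomain_single

theorem starA_one : starA 1 = 1 := by
  simpa only [inv_one, oA, map_one] using starA_oA 1

theorem starA_mul (x y : MonoidAlgebra ℝ (Equiv.Perm (Fin 3))) :
    starA (x * y) = starA y * starA x := by
  induction x using MonoidAlgebra.induction_on with
  | of σ =>
    induction y using MonoidAlgebra.induction_on with
    | of ρ =>
      change starA (oA σ * oA ρ) = starA (oA ρ) * starA (oA σ)
      rw [← oA_mul, starA_oA, starA_oA, starA_oA, mul_inv_rev, oA_mul]
    | add y y' hy hy' => rw [mul_add, starA_add, starA_add, hy, hy', add_mul]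
    | smul r y hy => rw [mul_smul_comm, starA_smul, starA_smul, hy, smul_mul_assoc]
  | add x x' hx hx' => rw [add_mul, starA_add, starA_add, hx, hx', mul_add]
  | smul r x hx => rw [smul_mul_assoc, starA_smul, starA_smul, hx, mul_smul_comm]

theorem tau3_inv : tau3⁻¹ = tau3 := Equiv.swap_inv 0 1

theorem nu3_inv : nu3⁻¹ = nu3 := Equiv.swap_inv 0 2

theorem starA_Qp : starA Qp = Qp := by
  rw [Qp, starA_smul, starA_add, starA_one, starA_oA, tau3_inv]

theorem starA_Qm : starA Qm = Qm := by
  rw [Qm, starA_smul, starA_sub, starA_one, starA_oA, tau3_inv]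

theorem starA_Jel : starA Jel = R1el := by
  rw [Jel, starA_mul, starA_mul, starA_Qp, starA_Qm, starA_oA, nu3_inv, R1el, mul_assoc]

theorem starA_RRel : starA RRel = (4 / 3 : ℝ) • Jel := by
  rw [RRel, R1el, starA_smul, starA_mul, starA_mul, starA_Qp, starA_Qm, starA_oA, nu3_inv,
    Jel, mul_assoc]

theorem starA_QJ : starA QJ = QJ := by
  rw [QJ, starA_mul, starA_RRel, starA_Jel, RRel, smul_mul_assoc, mul_smul_comm]

theorem starA_QR : starA QR = QR := by
  rw [QR, starA_mul, starA_RRel, starA_Jel, RRel, smul_mul_assoc, mul_smul_comm]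

/-- In `ℝ[S₃]`, `Q_J = J·R` and `Q_R = R·J` are self-adjoint idempotents with
`Q_J·Q_R = 0 = Q_R·Q_J`, `Q_J·J = J = J·Q_R`, `Q_R·R = R = R·Q_J`,
`Q_J·C = 0 = C·Q_R`, `Q⁺_τ·Q_J = Q_J = Q_J·Q⁺_τ` and `Q⁻_τ·Q_R = Q_R = Q_R·Q⁻_τ`. -/
theorem QJ_QR_projections :
    starA QJ = QJ ∧ QJ * QJ = QJ ∧
      starA QR = QR ∧ QR * QR = QR ∧
      QJ * QR = 0 ∧ QR * QJ = 0 ∧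
      QJ * Jel = Jel ∧ Jel * QR = Jel ∧
      QR * RRel = RRel ∧ RRel * QJ = RRel ∧
      QJ * Cel = 0 ∧ Cel * QR = 0 ∧
      Qp * QJ = QJ ∧ QJ * Qp = QJ ∧
      Qm * QR = QR ∧ QR * Qm = QR := by
  refine ⟨starA_QJ, ?_, starA_QR, ?_, ?_, ?_, ?_, ?_, ?_, ?_, ?_, ?_, ?_, ?_, ?_, ?_⟩
  · rw [QJ, ← mul_assoc, Jel_mul_RRel_mul_Jel]
  · rw [QR, ← mul_assoc, RRel_mul_Jel_mul_RRel]
  · rw [QJ, QR, mul_assoc, ← mul_assoc RRel, RRel_mul_RRel, zero_mul, mul_zero]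
  · rw [QR, QJ, mul_assoc, ← mul_assoc Jel, Jel_mul_Jel, zero_mul, mul_zero]
  · rw [QJ, Jel_mul_RRel_mul_Jel]
  · rw [QR, ← mul_assoc, Jel_mul_RRel_mul_Jel]
  · rw [QR, RRel_mul_Jel_mul_RRel]
  · rw [QJ, ← mul_assoc, RRel_mul_Jel_mul_RRel]
  · rw [QJ, mul_assoc, RRel_mul_Cel, mul_zero]
  · rw [QR, ← mul_assoc, Cel_mul_RRel, zero_mul]
  · rw [QJ, ← mul_assoc, Qp_mul_Jel]
  · rw [QJ, mul_assoc, RRel_mul_Qp]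
  · rw [QR, ← mul_assoc, Qm_mul_RRel]
  · rw [QR, mul_assoc, Jel_mul_Qm]

end
end

section
/- Let V be a finite-dimensional vector space with nondegenerate symmetric bilinear form g, and let J₁, J₂ be metric-g acyclic Jacobi curvature operators (symmetric, acyclic, self-adjoint valued, with the exchange property g(J(u,v)w,x) = g(J(w,x)u,v)). If there exist nonempty open sets U, W ⊆ V such that g(J₁(u,u)w,w) = g(J₂(u,u)w,w) for all (u,w) ∈ U × W, then J₁ = J₂. -/
lemma quad_zero_aux (a b c : ℝ) (S : Set ℝ) (hS : S.Infinite)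
    (h : ∀ t ∈ S, a + b*t + c*t^2 = 0) (t : ℝ) : a + b*t + c*t^2 = 0 := by
  have hp : (Polynomial.C a + Polynomial.C b * Polynomial.X
      + Polynomial.C c * Polynomial.X^2 : Polynomial ℝ) = 0 := by
    apply Polynomial.eq_zero_of_infinite_isRoot
    apply hS.mono
    intro s hs
    simp only [Set.mem_setOf_eq, Polynomial.IsRoot, Polynomial.eval_add,
      Polynomial.eval_mul, Polynomial.eval_C, Polynomial.eval_X, Polynomial.eval_pow]
    exact h s hs
  have := congrArg (Polynomial.eval t) hp
  simpa using this

lemma infinite_slice {V : Type*} [NormedAddCommGroup V] [NormedSpace ℝ V]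
    (U : Set V) (hU : IsOpen U) (u₀ : V) (hu : u₀ ∈ U) (x : V) :
    {t : ℝ | u₀ + t • x ∈ U}.Infinite := by
  have hopen : IsOpen {t : ℝ | u₀ + t • x ∈ U} := by
    have hc : Continuous fun t : ℝ => u₀ + t • x := by fun_prop
    exact hU.preimage hc
  have h0 : (0:ℝ) ∈ {t : ℝ | u₀ + t • x ∈ U} := by simp [hu]
  rcases Metric.isOpen_iff.1 hopen 0 h0 with ⟨ε, hε, hball⟩
  have : Set.Ioo (-(ε/2)) (ε/2) ⊆ {t : ℝ | u₀ + t • x ∈ U} := by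
    intro t ht
    apply hball
    simp only [Metric.mem_ball, Real.dist_eq, sub_zero]
    rcases ht with ⟨h1, h2⟩
    rw [abs_lt]; constructor <;> linarith
  exact ((Set.Ioo_infinite (by linarith)).mono this)

/-- Two metric-`g` acyclic Jacobi curvature operators on a finite-dimensional vector
space with nondegenerate symmetric bilinear form `g` which have the same sectional
quadratic forms `g(J(u,u)w,w)` for all `(u,w)` in a product of nonempty open sets are
equal. -/
theorem jacobi_determined_by_quadratic_forms
    {V : Type*} [NormedAddCommGroup V] [NormedSpace ℝ V] [FiniteDimensional ℝ V]
    (g : V →ₗ[ℝ] V →ₗ[ℝ] ℝ)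
    (hgsym : ∀ u v : V, g u v = g v u)
    (hgnd : ∀ u : V, (∀ v : V, g u v = 0) → u = 0)
    (J₁ J₂ : V →ₗ[ℝ] V →ₗ[ℝ] V →ₗ[ℝ] V)
    (hs₁ : ∀ u v : V, J₁ u v = J₁ v u)
    (hc₁ : ∀ u v w : V, J₁ u v w + J₁ v w u + J₁ w u v = 0)
    (he₁ : ∀ u v w x : V, g (J₁ u v w) x = g (J₁ w x u) v)
    (hs₂ : ∀ u v : V, J₂ u v = J₂ v u)
    (hc₂ : ∀ u v w : V, J₂ u v w + J₂ v w u + J₂ w u v = 0)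
    (he₂ : ∀ u v w x : V, g (J₂ u v w) x = g (J₂ w x u) v)
    (U W : Set V) (hU : IsOpen U) (hUne : U.Nonempty)
    (hW : IsOpen W) (hWne : W.Nonempty)
    (h : ∀ u ∈ U, ∀ w ∈ W, g (J₁ u u w) w = g (J₂ u u w) w) :
    J₁ = J₂ := by
  obtain ⟨u₀, hu₀⟩ := hUne
  obtain ⟨w₀, hw₀⟩ := hWne
  set D : V → V → V → V → ℝ := fun u v w x => g (J₁ u v w) x - g (J₂ u v w) x with hDdef
  have hDsym : ∀ u v w x, D u v w x = D v u w x := by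
    intro u v w x; simp only [hDdef]; rw [hs₁, hs₂]
  have hDex : ∀ u v w x, D u v w x = D w x u v := by
    intro u v w x; simp only [hDdef]; rw [he₁, he₂]
  have hexp1 : ∀ (t : ℝ) (x u w : V),
      D (u + t • x) (u + t • x) w w
        = D u u w w + (D u x w w + D x u w w) * t + D x x w w * t^2 := by
    intro t x u w
    simp only [hDdef, map_add, map_smul, LinearMap.add_apply, LinearMap.smul_apply,
      smul_eq_mul]
    ring
  have hexp2 : ∀ (t : ℝ) (y u v w : V),
      D u v (w + t • y) (w + t • y)
        = D u v w w + (D u v w y + D u v y w) * t + D u v y y * t^2 := by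
    intro t y u v w
    simp only [hDdef, map_add, map_smul, LinearMap.add_apply, LinearMap.smul_apply,
      smul_eq_mul]
    ring
  have step1 : ∀ u : V, ∀ w ∈ W, D u u w w = 0 := by
    intro u w hw
    have hS := infinite_slice U hU u₀ hu₀ (u - u₀)
    have hall := quad_zero_aux (D u₀ u₀ w w)
      (D u₀ (u - u₀) w w + D (u - u₀) u₀ w w) (D (u - u₀) (u - u₀) w w) _ hS
      (fun t ht => by
        have h0 : D (u₀ + t • (u - u₀)) (u₀ + t • (u - u₀)) w w = 0 := by
          simp only [hDdef]
          rw [h _ ht w hw]; ring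
        rw [hexp1] at h0
        linarith) 1
    have hpt : u₀ + (1:ℝ) • (u - u₀) = u := by module
    have := hexp1 1 (u - u₀) u₀ w
    rw [hpt] at this
    rw [this]
    linarith
  have hQ : ∀ u w : V, D u u w w = 0 := by
    intro u w
    have hS := infinite_slice W hW w₀ hw₀ (w - w₀)
    have hall := quad_zero_aux (D u u w₀ w₀)
      (D u u w₀ (w - w₀) + D u u (w - w₀) w₀) (D u u (w - w₀) (w - w₀)) _ hS
      (fun t ht => by
        have h0 := step1 u _ ht
        rw [hexp2] at h0
        linarith) 1
    have hpt : w₀ + (1:ℝ) • (w - w₀) = w := by module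
    have := hexp2 1 (w - w₀) u u w₀
    rw [hpt] at this
    rw [this]
    linarith
  have hP1 : ∀ u v w : V, D u v w w = 0 := by
    intro u v w
    have h1 := hQ (u + v) w
    have expand : D (u+v) (u+v) w w = D u u w w + D u v w w + D v u w w + D v v w w := by
      simp only [hDdef, map_add, LinearMap.add_apply]; ring
    rw [expand, hQ u w, hQ v w, hDsym v u w w] at h1
    linarith
  have hP2 : ∀ u v w x : V, D u v w x + D u v x w = 0 := by
    intro u v w x
    have h1 := hP1 u v (w + x)
    have expand : D u v (w+x) (w+x) = D u v w w + D u v w x + D u v x w + D u v x x := by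
      simp only [hDdef, map_add, LinearMap.add_apply]; ring
    rw [expand, hP1 u v w, hP1 u v x] at h1
    linarith
  have hzero : ∀ u v w x : V, D u v w x = 0 := by
    intro u v w x
    have h1 : D u v w x = D u v x w := by
      rw [hDex u v w x, hDsym w x u v, hDex x w u v]
    have h3 := hP2 u v w x
    linarith
  have hfin : ∀ u v w : V, J₁ u v w = J₂ u v w := by
    intro u v w
    have hz : J₁ u v w - J₂ u v w = 0 := by
      apply hgnd
      intro x
      have := hzero u v w x
      simp only [hDdef] at this
      rw [map_sub, LinearMap.sub_apply]
      linarith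
    exact sub_eq_zero.1 hz
  ext u v w
  exact hfin u v w
end

section
/- Let V be a vector space of dimension d ≥ 3 with nondegenerate symmetric bilinear form g, and h a symmetric bilinear form on V with associated g-self-adjoint operator H (g(Hx,y) = h(x,y)). Define T = h ⊗ 1_V ∈ L(V,V;L(V;V)) by T(u,v)w = h(u,v)w. Then the trace of the metric Jacobi projection applied to T satisfies: trace ∘ (orthogonal projection of T onto metric-g Jacobi operators) = (1/3)[(d−2)h + c(h)g], where c(h) = trace(H). In particular, for T_h = (3/(d−2))[h ⊗ 1_V − (c(h)/(2(d−1))) g ⊗ 1_V], the trace of its Jacobi projection equals h. -/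
/-!
Writing `b(x, y) = g(B x, y)`, the eight-term formula is `g(J(u,v)w, x)` for the operator
`J(u,v) = ⅙ [(b(u,v) + b(v,u)) id − b(u,·) v − b(v,·) u + (g(u,v) + g(v,u)) B
  − g(u,·) B v − g(v,·) B u]`,
so by nondegeneracy of `g` the Jacobi projection is this `J`. The trace of the rank-one map
`f(·) y` is `f y`, which gives `tr J(u,v) = ⅓ [(d − 2) b(u,v) + tr B · g(u,v)]` for symmetric
`b` and `g`. The second claim is the first for `b = T_h`, whose operator
`3/(d−2) (H − c(h)/(2(d−1)) id)` has trace `3/(d−2) · c(h) (d−2)/(2(d−1))`.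
-/

namespace LinearMap

variable {K V : Type*} [Field K] [AddCommGroup V] [Module K V]

/-- `J` is the metric Jacobi projection of `T = b ⊗ 1_V`, i.e. of `T(u,v)w = b(u,v) w`. -/
def IsMetricJacobiProjection (g : V →ₗ[K] V →ₗ[K] K) (b : V → V → K)
    (J : V → V → (V →ₗ[K] V)) : Prop :=
  ∀ u v w x : V, g (J u v w) x =
    ((1 : K) / 6) * (b u v * g w x + b v u * g w x - b u w * g v x - b v w * g u x
      + b w x * g u v + b w x * g v u - b v x * g u w - b u x * g v w)

def jacobiOp (g b : V →ₗ[K] V →ₗ[K] K) (B : V →ₗ[K] V) (u v : V) : V →ₗ[K] V :=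
  ((1 : K) / 6) • ((b u v + b v u) • id - (b u).smulRight v - (b v).smulRight u
    + (g u v + g v u) • B - (g u).smulRight (B v) - (g v).smulRight (B u))

variable {g b : V →ₗ[K] V →ₗ[K] K} {B : V →ₗ[K] V}

theorem isMetricJacobiProjection_jacobiOp (hB : ∀ x y : V, g (B x) y = b x y) :
    IsMetricJacobiProjection g (fun x y ↦ b x y) (jacobiOp g b B) := by
  intro u v w x
  simp only [jacobiOp, smul_apply, sub_apply, add_apply, id_apply, smulRight_apply, map_smul,
    map_sub, map_add, smul_eq_mul, hB]
  ring

theorem IsMetricJacobiProjection.eq_jacobiOp {J : V → V → (V →ₗ[K] V)}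
    (hJ : IsMetricJacobiProjection g (fun x y ↦ b x y) J)
    (hgnd : ∀ u : V, (∀ v : V, g u v = 0) → u = 0) (hB : ∀ x y : V, g (B x) y = b x y) :
    J = jacobiOp g b B := by
  ext u v w : 3
  refine sub_eq_zero.mp (hgnd _ fun x ↦ ?_)
  rw [map_sub, sub_apply, hJ, isMetricJacobiProjection_jacobiOp hB, sub_self]

theorem trace_jacobiOp [FiniteDimensional K V] [CharZero K]
    (hgsym : ∀ u v : V, g u v = g v u) (hbsym : ∀ u v : V, b u v = b v u)
    (hB : ∀ x y : V, g (B x) y = b x y) (u v : V) :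
    trace K V (jacobiOp g b B u v)
      = (1 / 3) * ((Module.finrank K V - 2) * b u v + trace K V B * g u v) := by
  have hBv : g u (B v) = b u v := by rw [hgsym, hB, hbsym]
  have hBu : g v (B u) = b u v := by rw [hgsym, hB]
  simp only [jacobiOp, map_smul, map_sub, map_add, trace_id, trace_smulRight, smul_eq_mul,
    hBv, hBu, hbsym v u, hgsym v u]
  ring

end LinearMap

/-- Let `V` have dimension `d ≥ 3`, `g` a nondegenerate symmetric bilinear form, `h` a
symmetric bilinear form with `g`-self-adjoint operator `H` (`g(Hx,y) = h(x,y)`), and let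
`T = h ⊗ 1_V`.  If `Jop` is the metric Jacobi projection of `T` (characterized by the
explicit eight-term formula), then `trace(Jop(u,v)) = (1/3)[(d−2)h(u,v) + c(h)·g(u,v)]`
with `c(h) = trace H`.  In particular, if `Jop'` is the metric Jacobi projection of
`T_h = (3/(d−2))[h ⊗ 1_V − (c(h)/(2(d−1)))·g ⊗ 1_V]`, then `trace(Jop'(u,v)) = h(u,v)`. -/
theorem trace_jacobi_projection_of_h_tensor_id
    {V : Type*} [AddCommGroup V] [Module ℝ V] [FiniteDimensional ℝ V]
    (hd : 3 ≤ Module.finrank ℝ V)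
    (g h : V →ₗ[ℝ] V →ₗ[ℝ] ℝ)
    (hgsym : ∀ u v : V, g u v = g v u)
    (hgnd : ∀ u : V, (∀ v : V, g u v = 0) → u = 0)
    (hhsym : ∀ u v : V, h u v = h v u)
    (H : V →ₗ[ℝ] V) (hH : ∀ x y : V, g (H x) y = h x y)
    (Jop Jop' : V → V → (V →ₗ[ℝ] V))
    (hJop : ∀ u v w x : V, g (Jop u v w) x =
      ((1 : ℝ) / 6) * (h u v * g w x + h v u * g w x - h u w * g v x - h v w * g u x
        + h w x * g u v + h w x * g v u - h v x * g u w - h u x * g v w))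
    (hJop' : ∀ u v w x : V,
      (let d : ℝ := (Module.finrank ℝ V : ℝ)
       let h' : V → V → ℝ := fun a b =>
         (3 / (d - 2)) * (h a b - (LinearMap.trace ℝ V H / (2 * (d - 1))) * g a b)
       g (Jop' u v w) x =
        ((1 : ℝ) / 6) * (h' u v * g w x + h' v u * g w x - h' u w * g v x - h' v w * g u x
          + h' w x * g u v + h' w x * g v u - h' v x * g u w - h' u x * g v w))) :
    (∀ u v : V, LinearMap.trace ℝ V (Jop u v)
      = ((1 : ℝ) / 3) * (((Module.finrank ℝ V : ℝ) - 2) * h u v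
          + (LinearMap.trace ℝ V H) * g u v)) ∧
    (∀ u v : V, LinearMap.trace ℝ V (Jop' u v) = h u v) := by
  open LinearMap in
  set d : ℝ := (Module.finrank ℝ V : ℝ) with hd_def
  have hd3 : (3 : ℝ) ≤ d := by rw [hd_def]; exact_mod_cast hd
  have hd2 : d - 2 ≠ 0 := by linarith
  have hd1 : d - 1 ≠ 0 := by linarith
  set k := trace ℝ V H / (2 * (d - 1))
  set h' := (3 / (d - 2)) • (h - k • g)
  set H' := (3 / (d - 2)) • (H - k • LinearMap.id)
  have hH' (x y : V) : g (H' x) y = h' x y := by simp [h', H', hH]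
  have hh'sym (u v : V) : h' u v = h' v u := by simp [h', hhsym u v, hgsym u v]
  have hJop'_jacobi : IsMetricJacobiProjection g (fun x y ↦ h' x y) Jop' := by
    simpa [IsMetricJacobiProjection, h', k] using hJop'
  have htrace_H' : trace ℝ V H' = 3 / (d - 2) * (trace ℝ V H - k * d) := by
    simp [H', d]
  refine ⟨fun u v ↦ ?_, fun u v ↦ ?_⟩
  · rw [IsMetricJacobiProjection.eq_jacobiOp hJop hgnd hH, trace_jacobiOp hgsym hhsym hH]
  · rw [hJop'_jacobi.eq_jacobiOp hgnd hH', trace_jacobiOp hgsym hh'sym hH', ← hd_def, htrace_H']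
    simp only [h', k, LinearMap.smul_apply, LinearMap.sub_apply, smul_eq_mul]
    field_simp
    ring
end

section
/- Let (V,b) be a finite-dimensional semi-Riemannian vector space and J a metric-b algebraic Jacobi curvature operator. Define G : V → L(V;V) by G(x) = 1_V − (1/3)J(x,x), and let U be the open set of x with G(x) invertible, with metric g on U given by g_x(u,v) = b(G(x)u,v). Then g is symmetric nondegenerate on U, g_0 = b, and the second derivative of g at 0 satisfies g''(0)(v,w)(y,z) = −(2/3)b(J(v,w)y,z) for all v,w,y,z ∈ V; in particular the second derivative of the metric components has the exchange symmetry g_{αβ,γλ}(0) = g_{γλ,αβ}(0). -/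
/-!
`G(x)` is `b`-self-adjoint because `b(J(x,x)u, v) = b(J(u,v)x, x)` by the exchange property, and
the right-hand side is symmetric in `u, v` since `J` is. Nondegeneracy of `g_x` is that of `b`
transported by the injective `G(x)`; openness of `U` holds because in finite dimension `x ↦ G(x)`
is continuous into the operator algebra, whose units form an open set. Finally
`g_x(y,z) = b(y,z) - (1/3) b(J(x,x)y, z)` is a constant plus a quadratic form in `x`, so its
second derivative is the polarisation `-(1/3)(b(J(v,w)y,z) + b(J(w,v)y,z)) = -(2/3) b(J(v,w)y,z)`,
and the exchange property makes this symmetric under `(v,w) ↔ (y,z)`.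
-/

section Calculus

variable {𝕜 : Type*} [NontriviallyNormedField 𝕜]
  {E : Type*} [NormedAddCommGroup E] [NormedSpace 𝕜 E]
  {F : Type*} [NormedAddCommGroup F] [NormedSpace 𝕜 F]

theorem ContinuousLinearMap.fderiv_const_add_apply_self (B : E →L[𝕜] E →L[𝕜] F) (c : F) :
    fderiv 𝕜 (fun x => c + B x x) = ⇑(B + B.flip) := by
  funext x
  rw [fderiv_const_add, B.fderiv_of_bilinear differentiableAt_fun_id differentiableAt_fun_id]
  ext h
  simp

theorem ContinuousLinearMap.iteratedFDeriv_two_const_add_apply_self (B : E →L[𝕜] E →L[𝕜] F)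
    (c : F) (x v w : E) :
    iteratedFDeriv 𝕜 2 (fun x => c + B x x) x ![v, w] = B v w + B w v := by
  rw [iteratedFDeriv_two_apply, B.fderiv_const_add_apply_self, ContinuousLinearMap.fderiv]
  simp

theorem LinearMap.isOpen_setOf_isUnit [CompleteSpace 𝕜] [FiniteDimensional 𝕜 E]
    {X : Type*} [TopologicalSpace X] {f : X → E →ₗ[𝕜] E}
    (hf : Continuous fun x => LinearMap.toContinuousLinearMap (f x)) :
    IsOpen {x | IsUnit (f x)} := by
  have := FiniteDimensional.complete 𝕜 E
  simp_rw [← isUnit_map_iff (Module.End.toContinuousLinearMap E)]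
  exact Units.isOpen.preimage hf

end Calculus

theorem LinearMap.SeparatingLeft.comp_of_injective {R M N P : Type*} [CommSemiring R]
    [AddCommMonoid M] [Module R M] [AddCommMonoid N] [Module R N] [AddCommMonoid P] [Module R P]
    {B : M →ₗ[R] N →ₗ[R] P} (hB : B.SeparatingLeft) {f : M →ₗ[R] M}
    (hf : Function.Injective f) : (B ∘ₗ f).SeparatingLeft :=
  fun u hu => hf <| by rw [hB _ hu, map_zero]

section Osculating

variable {V : Type*} [AddCommGroup V] [Module ℝ V]

noncomputable def osculatingOperator (J : V →ₗ[ℝ] V →ₗ[ℝ] V →ₗ[ℝ] V) (x : V) : V →ₗ[ℝ] V :=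
  LinearMap.id - ((1 : ℝ) / 3) • J x x

variable {b : V →ₗ[ℝ] V →ₗ[ℝ] ℝ} {J : V →ₗ[ℝ] V →ₗ[ℝ] V →ₗ[ℝ] V}

theorem osculatingOperator_apply (x u : V) :
    osculatingOperator J x u = u - ((1 : ℝ) / 3) • J x x u := rfl

@[simp]
theorem osculatingOperator_zero : osculatingOperator J 0 = LinearMap.id := by
  simp [osculatingOperator]

theorem apply_osculatingOperator_apply (x u v : V) :
    b (osculatingOperator J x u) v = b u v - (1 / 3 : ℝ) * b (J x x u) v := by
  simp [osculatingOperator_apply]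

theorem apply_jacobi_self_comm (hJsym : ∀ u v : V, J u v = J v u)
    (hJex : ∀ u v w x : V, b (J u v w) x = b (J w x u) v) (x u v : V) :
    b (J x x u) v = b (J x x v) u := by
  rw [hJex x x u v, hJex x x v u, hJsym v u]

theorem apply_osculatingOperator_comm (hbsym : ∀ u v : V, b u v = b v u)
    (hJsym : ∀ u v : V, J u v = J v u)
    (hJex : ∀ u v w x : V, b (J u v w) x = b (J w x u) v) (x u v : V) :
    b (osculatingOperator J x u) v = b (osculatingOperator J x v) u := by
  rw [apply_osculatingOperator_apply, apply_osculatingOperator_apply, hbsym u,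
    apply_jacobi_self_comm hJsym hJex]

end Osculating

section Smooth

variable {V : Type*} [NormedAddCommGroup V] [NormedSpace ℝ V] [FiniteDimensional ℝ V]

theorem isOpen_setOf_isUnit_osculatingOperator (J : V →ₗ[ℝ] V →ₗ[ℝ] V →ₗ[ℝ] V) :
    IsOpen {x | IsUnit (osculatingOperator J x)} := by
  set Jc := (J.compr₂ LinearMap.toContinuousLinearMap.toLinearMap).toContinuousBilinearMap
  have hJc : (fun x => LinearMap.toContinuousLinearMap (osculatingOperator J x))
      = fun x => 1 - ((1 : ℝ) / 3) • Jc x x := by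
    funext x; ext u; simp [Jc, osculatingOperator_apply]
  refine LinearMap.isOpen_setOf_isUnit ?_
  rw [hJc]
  fun_prop

theorem iteratedFDeriv_two_apply_osculatingOperator_apply (b : V →ₗ[ℝ] V →ₗ[ℝ] ℝ)
    {J : V →ₗ[ℝ] V →ₗ[ℝ] V →ₗ[ℝ] V} (hJsym : ∀ u v : V, J u v = J v u) (v w y z : V) :
    iteratedFDeriv ℝ 2 (fun x => b (osculatingOperator J x y) z) 0 ![v, w]
      = -((2 : ℝ) / 3) * b (J v w y) z := by
  set Q := (-(1 / 3 : ℝ)) •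
    ((J.compr₂ (LinearMap.applyₗ y)).compr₂ (b.flip z)).toContinuousBilinearMap
  have hQ_apply (u u' : V) : Q u u' = -(1 / 3 : ℝ) * b (J u u' y) z := by
    simp [Q]
  have hQ : (fun x => b (osculatingOperator J x y) z) = fun x => b y z + Q x x := by
    funext x
    rw [apply_osculatingOperator_apply, hQ_apply]
    ring
  rw [hQ, Q.iteratedFDeriv_two_const_add_apply_self, hQ_apply, hQ_apply, hJsym w]
  ring

end Smooth

theorem osculating_metric_second_derivative_general
    {V : Type*} [NormedAddCommGroup V] [NormedSpace ℝ V] [FiniteDimensional ℝ V]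
    (b : V →ₗ[ℝ] V →ₗ[ℝ] ℝ)
    (hbsym : ∀ u v : V, b u v = b v u)
    (hbnd : ∀ u : V, (∀ v : V, b u v = 0) → u = 0)
    (J : V →ₗ[ℝ] V →ₗ[ℝ] V →ₗ[ℝ] V)
    (hJsym : ∀ u v : V, J u v = J v u)
    (hJex : ∀ u v w x : V, b (J u v w) x = b (J w x u) v) :
    let G : V → (V →ₗ[ℝ] V) := fun x => LinearMap.id - ((1 : ℝ) / 3) • (J x x)
    IsOpen {x : V | IsUnit (G x)} ∧
      (0 : V) ∈ {x : V | IsUnit (G x)} ∧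
      (∀ x : V, IsUnit (G x) → ∀ u v : V, b (G x u) v = b (G x v) u) ∧
      (∀ x : V, IsUnit (G x) → ∀ u : V, (∀ v : V, b (G x u) v = 0) → u = 0) ∧
      (∀ u v : V, b (G 0 u) v = b u v) ∧
      (∀ v w y z : V,
        iteratedFDeriv ℝ 2 (fun x : V => b (G x y) z) 0 ![v, w]
          = -((2 : ℝ) / 3) * b (J v w y) z) ∧
      (∀ v w y z : V,
        iteratedFDeriv ℝ 2 (fun x : V => b (G x y) z) 0 ![v, w]
          = iteratedFDeriv ℝ 2 (fun x : V => b (G x v) w) 0 ![y, z]) := by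
  intro G
  have hG : G = osculatingOperator J := rfl
  have hsecond := iteratedFDeriv_two_apply_osculatingOperator_apply b hJsym
  rw [hG]
  refine ⟨isOpen_setOf_isUnit_osculatingOperator J, by simp [← Module.End.one_eq_id], ?_, ?_, ?_,
    hsecond, ?_⟩
  · exact fun x _ => apply_osculatingOperator_comm hbsym hJsym hJex x
  · exact fun x hx =>
      LinearMap.SeparatingLeft.comp_of_injective hbnd ((Module.End.isUnit_iff _).1 hx).injective
  · simp
  · intro v w y z
    rw [hsecond, hsecond, hJex]

/-- Let `(V,b)` be a finite-dimensional semi-Riemannian vector space and `J` a metric-`b`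
algebraic Jacobi curvature operator.  With `G(x) = 1_V − (1/3)J(x,x)` and
`U = {x | G(x) invertible}`, the bilinear form `g_x(u,v) = b(G(x)u,v)` is symmetric and
nondegenerate for `x ∈ U` (which is open and contains `0`), `g₀ = b`, and the second
derivative of `g` at `0` is `g''(0)(v,w)(y,z) = −(2/3)·b(J(v,w)y,z)`; in particular the
second derivatives of the metric have the exchange symmetry
`g''(0)(v,w)(y,z) = g''(0)(y,z)(v,w)`. -/
theorem osculating_metric_second_derivative
    {V : Type*} [NormedAddCommGroup V] [NormedSpace ℝ V] [FiniteDimensional ℝ V]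
    (b : V →ₗ[ℝ] V →ₗ[ℝ] ℝ)
    (hbsym : ∀ u v : V, b u v = b v u)
    (hbnd : ∀ u : V, (∀ v : V, b u v = 0) → u = 0)
    (J : V →ₗ[ℝ] V →ₗ[ℝ] V →ₗ[ℝ] V)
    (hJsym : ∀ u v : V, J u v = J v u)
    (hJcyc : ∀ u v w : V, J u v w + J v w u + J w u v = 0)
    (hJex : ∀ u v w x : V, b (J u v w) x = b (J w x u) v) :
    let G : V → (V →ₗ[ℝ] V) := fun x => LinearMap.id - ((1 : ℝ) / 3) • (J x x)
    IsOpen {x : V | IsUnit (G x)} ∧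
      (0 : V) ∈ {x : V | IsUnit (G x)} ∧
      (∀ x : V, IsUnit (G x) → ∀ u v : V, b (G x u) v = b (G x v) u) ∧
      (∀ x : V, IsUnit (G x) → ∀ u : V, (∀ v : V, b (G x u) v = 0) → u = 0) ∧
      (∀ u v : V, b (G 0 u) v = b u v) ∧
      (∀ v w y z : V,
        iteratedFDeriv ℝ 2 (fun x : V => b (G x y) z) 0 ![v, w]
          = -((2 : ℝ) / 3) * b (J v w y) z) ∧
      (∀ v w y z : V,
        iteratedFDeriv ℝ 2 (fun x : V => b (G x y) z) 0 ![v, w]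
          = iteratedFDeriv ℝ 2 (fun x : V => b (G x v) w) 0 ![y, z]) :=
  osculating_metric_second_derivative_general b hbsym hbnd J hJsym hJex
end
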